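/- arXiv:1912.12343 — 2 statements merged into one kernel-verified Lean document; each statement's English description precedes it below -/
import Mathlib

section
/- Let n ≥ 2 and k ∈ Comp(n,n). Then the number of column-restricted parking functions of size n with column heights k satisfies the recursion |CPF(n,k)| = Σ_{j=1}^{i_k−1} |CPF(n−1, k̃_j)|. -/
open Finset

/-- The operation k ↦ k̃_j (0-based index `j`): decrease the `j`-th entry by 1,
then delete the leftmost zero entry of the resulting tuple. -/
def ktilde (k : List ℕ) (j : ℕ) : List ℕ :=
  (k.set j (k.getD j 0 - 1)).erase 0

/-- The asymmetric multinomial coefficient ⟨⟨n;k⟩⟩, defined by ⟨⟨1;(1)⟩⟩ = 1 and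
⟨⟨n;k⟩⟩ = Σ_{j=1}^{i_k-1} ⟨⟨n-1;k̃_j⟩⟩, where i_k is the (1-based) position of the
leftmost zero of k (i_k = n+1 if there is no zero), so that the sum has
`k.indexOf 0` terms (0-based j). -/
def amc : ℕ → List ℕ → ℕ
  | 0, _ => 0
  | 1, k => if k = [1] then 1 else 0
  | n + 2, k => ∑ j ∈ Finset.range (k.idxOf 0), amc (n + 1) (ktilde k j)

/-- `f : Fin n → Fin n` (0-based labels and columns) is a parking function:
for every `i ≤ n` at least `i` labels lie in the first `i` columns. -/
def IsParking (n : ℕ) (f : Fin n → Fin n) : Prop :=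
  ∀ i : ℕ, i ≤ n → i ≤ (univ.filter fun a => (f a : ℕ) < i).card

/-- The dominance index of the label `a`: the number of columns strictly to the left of
`a`'s column containing no label greater than `a`. -/
def domIndex {n : ℕ} (f : Fin n → Fin n) (a : Fin n) : ℕ :=
  (univ.filter fun c : Fin n => c < f a ∧ ∀ b, f b = c → b < a).card

/-- Column-restricted parking function: every (1-based) label `a+1` satisfies
`d_f(a) < a+1`. -/
def IsCPF (n : ℕ) (f : Fin n → Fin n) : Prop :=
  IsParking n f ∧ ∀ a : Fin n, domIndex f a < (a : ℕ) + 1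

/-- The list of column heights of `f`. -/
def colHeights {n : ℕ} (f : Fin n → Fin n) : List ℕ :=
  List.ofFn fun c : Fin n => (univ.filter fun a => f a = c).card

/-- The number of column-restricted parking functions of size `n`. -/
noncomputable def cpfCount (n : ℕ) : ℕ := Nat.card {f : Fin n → Fin n // IsCPF n f}

/-- The number of column-restricted parking functions of size `n` with column heights `k`. -/
noncomputable def cpfCountWith (n : ℕ) (k : List ℕ) : ℕ :=
  Nat.card {f : Fin n → Fin n // IsCPF n f ∧ colHeights f = k}

/-- A composition `k` of `n` of length `n` is Catalan if `k_1 + ⋯ + k_j ≥ j` for all `j < n`. -/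
def IsCatalan (n : ℕ) (k : List ℕ) : Prop :=
  ∀ j < n, j ≤ (k.take j).sum


/-!
Label `0` of a column-restricted parking function `f` has dominance index `0`, so every column
up to its column `j` is occupied: `j < i_k`. Let `c` be the leftmost zero of `k` after lowering
`k_j` by one. Column `c` of `f` contains no label other than `0`, so deleting label `0` and
column `c` yields a function `g` of size `n - 1` with heights `k̃_j`, and `f` is recovered from
`g`, `j` and `c`. All columns left of `c` are occupied in `g`; this is what makes the parking
condition and the bounds `d(a) < a` pass between `f` and `g`, the dominance index of a label
changing by `1` exactly when the label lies to the right of column `c`.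
-/

lemma Fin.val_succAbove {m : ℕ} (c : Fin (m + 1)) (y : Fin m) :
    (c.succAbove y : ℕ) = if (y : ℕ) < c then (y : ℕ) else y + 1 := by
  unfold Fin.succAbove
  split <;> simp_all [Fin.lt_def]

namespace List

variable {α : Type*} {n : ℕ}

lemma set_ofFn (κ : Fin n → α) (i : Fin n) (b : α) :
    (ofFn κ).set i b = ofFn (Function.update κ i b) := by
  refine ext_getElem (by simp) fun x _ _ => ?_
  simp only [getElem_set, List.getElem_ofFn, Function.update_apply]
  by_cases h : (i : ℕ) = x <;> simp [h, Fin.ext_iff, eq_comm]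

lemma eraseIdx_ofFn (κ : Fin (n + 1) → α) (c : Fin (n + 1)) :
    (ofFn κ).eraseIdx c = ofFn (κ ∘ c.succAbove) := by
  have hlen : ((ofFn κ).eraseIdx c).length = n := by
    rw [length_eraseIdx_of_lt (by simp [c.is_le]), length_ofFn, Nat.add_sub_cancel]
  refine ext_getElem (by rw [hlen, length_ofFn]) fun x _ _ => ?_
  simp only [getElem_eraseIdx, List.getElem_ofFn, Function.comp_apply]
  split_ifs with h <;> congr 1 <;> ext <;> simp [Fin.val_succAbove, h]

variable [BEq α] [LawfulBEq α]

lemma lt_idxOf_ofFn_iff (κ : Fin n → α) (a : α) (j : Fin n) :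
    (j : ℕ) < (ofFn κ).idxOf a ↔ ∀ x ≤ j, κ x ≠ a := by
  simp only [idxOf, lt_findIdx_iff, length_ofFn, List.getElem_ofFn, beq_eq_false_iff_ne]
  exact ⟨fun ⟨_, h⟩ x hx => h x hx, fun h => ⟨j.2, fun y hy => h ⟨y, _⟩ hy⟩⟩

lemma idxOf_ofFn_eq {κ : Fin n → α} {a : α} {c : Fin n} (hc : κ c = a)
    (hlt : ∀ x < c, κ x ≠ a) : (ofFn κ).idxOf a = c := by
  rw [idxOf, findIdx_eq (by simp)]
  simp only [List.getElem_ofFn, beq_iff_eq, beq_eq_false_iff_ne]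
  exact ⟨hc, fun y hy => hlt ⟨y, _⟩ hy⟩

lemma erase_ofFn {κ : Fin (n + 1) → α} {a : α} {c : Fin (n + 1)} (hc : κ c = a)
    (hlt : ∀ x < c, κ x ≠ a) : (ofFn κ).erase a = ofFn (κ ∘ c.succAbove) := by
  rw [erase_eq_eraseIdx_of_idxOf (idxOf_ofFn_eq hc hlt), eraseIdx_ofFn]

end List

lemma exists_eq_zero_of_sum_lt {n : ℕ} {κ : Fin n → ℕ} (h : ∑ x, κ x < n) :
    ∃ x, κ x = 0 := by
  by_contra! hne
  have := card_nsmul_le_sum univ (fun x => κ x) 1 fun x _ => Nat.one_le_iff_ne_zero.2 (hne x)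
  simp only [card_univ, Fintype.card_fin, smul_eq_mul, mul_one] at this
  omega

section Columns

variable {n : ℕ}

lemma colHeights_eq_ofFn_iff (f : Fin n → Fin n) (κ : Fin n → ℕ) :
    colHeights f = List.ofFn κ ↔ ∀ x, #{b | f b = x} = κ x :=
  List.ofFn_inj.trans funext_iff

lemma le_card_filter_lt_of_forall_exists {g : Fin n → Fin n} {i : ℕ}
    (h : ∀ x < i, ∃ a, (g a : ℕ) = x) : i ≤ #{a | (g a : ℕ) < i} := by
  simpa using card_le_card_of_surjOn (s := {a | (g a : ℕ) < i}) (t := range i)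
    (fun a => (g a : ℕ)) fun x hx => by
      obtain ⟨a, rfl⟩ := h x (mem_range.1 hx)
      exact ⟨a, by simpa using hx, rfl⟩

/-- Each column counted by `domIndex g a` is occupied, hence holds a label smaller than `a`. -/
lemma domIndex_le_of_forall_exists {g : Fin n → Fin n} {a : Fin n}
    (h : ∀ x < (g a : ℕ), ∃ b, (g b : ℕ) = x) : domIndex g a ≤ a := by
  calc domIndex g a ≤ #((Iio a).image g) := by
        refine card_le_card fun x hx => ?_
        obtain ⟨hlt, hdom⟩ := (mem_filter.1 hx).2
        obtain ⟨b, hb⟩ := h x hlt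
        exact mem_image.2 ⟨b, mem_Iio.2 (hdom b (Fin.ext hb)), Fin.ext hb⟩
    _ ≤ #(Iio a) := card_image_le
    _ = a := Fin.card_Iio a

variable {m : ℕ}

lemma domIndex_zero_eq_zero_iff (f : Fin (m + 1) → Fin (m + 1)) :
    domIndex f 0 = 0 ↔ ∀ x < f 0, ∃ b, f b = x := by
  simp [domIndex, filter_eq_empty_iff]

lemma IsCPF.apply_zero_lt_idxOf {f : Fin (m + 1) → Fin (m + 1)} (hf : IsCPF (m + 1) f) :
    (f 0 : ℕ) < (colHeights f).idxOf 0 := by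
  have hd : domIndex f 0 = 0 := by simpa using hf.2 0
  rw [colHeights, List.lt_idxOf_ofFn_iff]
  intro x hx
  rcases hx.lt_or_eq with hlt | rfl
  · obtain ⟨b, hb⟩ := (domIndex_zero_eq_zero_iff f).1 hd x hlt
    exact card_ne_zero.2 ⟨b, by simpa using hb⟩
  · exact card_ne_zero.2 ⟨0, by simp⟩

lemma succ_ne_of_card_fiber_le {f : Fin (m + 1) → Fin (m + 1)} {x : Fin (m + 1)}
    (h : #{b | f b = x} ≤ if f 0 = x then 1 else 0) (a : Fin m) : f a.succ ≠ x := fun ha => by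
  have hpos : 0 < #{a : Fin m | f a.succ = x} := card_pos.2 ⟨a, by simpa using ha⟩
  rw [Fin.card_filter_univ_succ] at h
  split_ifs at h <;> omega

end Columns

/-- Insert an empty column into `g` at position `c`, then put a new least label `0` into
column `j`. -/
def addLabel {m : ℕ} (c j : Fin (m + 1)) (g : Fin m → Fin m) : Fin (m + 1) → Fin (m + 1) :=
  Fin.cons j (c.succAbove ∘ g)

namespace addLabel

variable {m : ℕ} (c j : Fin (m + 1)) (g : Fin m → Fin m)

@[simp] lemma apply_zero : addLabel c j g 0 = j := rfl

@[simp] lemma apply_succ (a : Fin m) : addLabel c j g a.succ = c.succAbove (g a) := rfl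

lemma injective : Function.Injective (addLabel c j) := fun _ _ h =>
  funext fun a => Fin.succAbove_right_inj.1 (congrFun h a.succ)

lemma card_fiber_self : #{b | addLabel c j g b = c} = if j = c then 1 else 0 := by
  rw [Fin.card_filter_univ_succ]
  simp [Fin.succAbove_ne]

lemma card_fiber_succAbove (x : Fin m) :
    #{b | addLabel c j g b = c.succAbove x}
      = (if j = c.succAbove x then 1 else 0) + #{a | g a = x} := by
  rw [Fin.card_filter_univ_succ]
  simp only [apply_zero, apply_succ, Fin.succAbove_right_inj]
  split <;> omega

lemma card_filter_lt (i : ℕ) :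
    #{b | (addLabel c j g b : ℕ) < i}
      = (if (j : ℕ) < i then 1 else 0) + #{a | (g a : ℕ) < if i ≤ c then i else i - 1} := by
  simp only [card_filter, Fin.sum_univ_succ, apply_zero, apply_succ, Fin.val_succAbove]
  congr 1
  refine sum_congr rfl fun a _ => ?_
  split_ifs <;> omega

lemma domIndex_succ (a : Fin m) :
    domIndex (addLabel c j g) a.succ = (if (c : ℕ) ≤ g a then 1 else 0) + domIndex g a := by
  have hc : (c < addLabel c j g a.succ ∧ ∀ b, addLabel c j g b = c → b < a.succ) ↔
      (c : ℕ) ≤ g a := by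
    simp only [Fin.forall_fin_succ, apply_zero, apply_succ, Fin.succAbove_ne, Fin.succ_pos,
      IsEmpty.forall_iff, implies_true, and_true]
    rw [Fin.lt_def, Fin.val_succAbove]
    split_ifs <;> omega
  have hy (y : Fin m) : (c.succAbove y < addLabel c j g a.succ ∧
      ∀ b, addLabel c j g b = c.succAbove y → b < a.succ) ↔
        (y < g a ∧ ∀ b, g b = y → b < a) := by
    simp [Fin.forall_fin_succ, Fin.succAbove_lt_succAbove_iff, Fin.succ_pos]
  simp only [domIndex, card_filter, Fin.sum_univ_succAbove _ c, hc, hy]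

variable {c j g}

lemma exists_eq {f : Fin (m + 1) → Fin (m + 1)} (hf0 : f 0 = j)
    (hf : ∀ a : Fin m, f a.succ ≠ c) : ∃ g, addLabel c j g = f := by
  choose g hg using fun a => Fin.exists_succAbove_eq (hf a)
  exact ⟨g, funext (Fin.cases hf0.symm hg)⟩

lemma isParking_iff (hjc : j ≤ c) (hcol : ∀ x < (c : ℕ), ∃ a, (g a : ℕ) = x) :
    IsParking (m + 1) (addLabel c j g) ↔ IsParking m g := by
  have hjc : (j : ℕ) ≤ c := hjc
  have hcm : (c : ℕ) ≤ m := Nat.lt_succ_iff.1 c.2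
  constructor
  · intro hf i hi
    rcases le_or_gt i c with hic | hic
    · exact le_card_filter_lt_of_forall_exists fun x hx => hcol x (by omega)
    · have := hf (i + 1) (by omega)
      rw [card_filter_lt, if_pos (by omega), if_neg (by omega), Nat.add_sub_cancel] at this
      omega
  · intro hg i hi
    rw [card_filter_lt]
    split_ifs with hji hic
    · have := hg i (by omega); omega
    · have := hg (i - 1) (by omega); omega
    · have := hg i (by omega); omega
    · omega

lemma domIndex_zero (hjc : j ≤ c) (hcol : ∀ x < (c : ℕ), ∃ a, (g a : ℕ) = x) :
    domIndex (addLabel c j g) 0 = 0 := by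
  refine (domIndex_zero_eq_zero_iff _).2 fun x hx => ?_
  have hxc : (x : ℕ) < c := lt_of_lt_of_le hx hjc
  obtain ⟨a, ha⟩ := hcol x hxc
  refine ⟨a.succ, Fin.ext ?_⟩
  rw [apply_succ, Fin.val_succAbove, if_pos (by omega), ha]

lemma isCPF_iff (hjc : j ≤ c) (hcol : ∀ x < (c : ℕ), ∃ a, (g a : ℕ) = x) :
    IsCPF (m + 1) (addLabel c j g) ↔ IsCPF m g := by
  unfold IsCPF
  rw [isParking_iff hjc hcol, Fin.forall_fin_succ, domIndex_zero hjc hcol]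
  simp only [Fin.val_zero, zero_add, zero_lt_one, true_and]
  refine and_congr_right fun _ => forall_congr' fun a => ?_
  rw [domIndex_succ, Fin.val_succ]
  split_ifs with hca
  · omega
  · have := domIndex_le_of_forall_exists (a := a) fun x hx => hcol x (by omega)
    omega

lemma colHeights_eq_ofFn_update_iff {κ : Fin (m + 1) → ℕ} (hc : κ c = 0) :
    colHeights (addLabel c j g) = List.ofFn (Function.update κ j (κ j + 1))
      ↔ colHeights g = List.ofFn (κ ∘ c.succAbove) := by
  rw [colHeights_eq_ofFn_iff, colHeights_eq_ofFn_iff, Fin.forall_iff_succAbove c, card_fiber_self]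
  simp only [card_fiber_succAbove, Function.update_apply, Function.comp_apply]
  have hself : (if j = c then 1 else 0) = if c = j then κ j + 1 else κ c := by
    rcases eq_or_ne j c with rfl | h
    · simp [hc]
    · simp [h, h.symm, hc]
  rw [iff_true_intro hself, true_and]
  refine forall_congr' fun i => ?_
  rcases eq_or_ne (c.succAbove i) j with h | h
  · simp [h]
    omega
  · simp [h, h.symm]

end addLabel

open Classical in
lemma card_isCPF_apply_zero_eq {m : ℕ} {κ : Fin (m + 1) → ℕ} {c j : Fin (m + 1)}
    (hjc : j ≤ c) (hc : κ c = 0) (hpos : ∀ x < c, κ x ≠ 0) :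
    #{f : Fin (m + 1) → Fin (m + 1) | (IsCPF (m + 1) f ∧
        colHeights f = List.ofFn (Function.update κ j (κ j + 1))) ∧ f 0 = j}
      = #{g : Fin m → Fin m | IsCPF m g ∧ colHeights g = List.ofFn (κ ∘ c.succAbove)} := by
  have hcol (g : Fin m → Fin m) (hg : colHeights g = List.ofFn (κ ∘ c.succAbove)) :
      ∀ x < (c : ℕ), ∃ a, (g a : ℕ) = x := by
    intro x hx
    have hxm : x < m := by omega
    have hlt : (⟨x, hxm⟩ : Fin m).castSucc < c := Fin.lt_def.2 hx
    have hx' := (colHeights_eq_ofFn_iff g _).1 hg ⟨x, hxm⟩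
    rw [Function.comp_apply, Fin.succAbove_of_castSucc_lt _ _ hlt] at hx'
    obtain ⟨a, ha⟩ := card_pos.1 (hx' ▸ Nat.pos_of_ne_zero (hpos _ hlt))
    exact ⟨a, by simp_all⟩
  have hmem (g : Fin m → Fin m) :
      (IsCPF (m + 1) (addLabel c j g) ∧
        colHeights (addLabel c j g) = List.ofFn (Function.update κ j (κ j + 1))) ∧
          addLabel c j g 0 = j ↔ IsCPF m g ∧ colHeights g = List.ofFn (κ ∘ c.succAbove) := by
    rw [addLabel.apply_zero, eq_self_iff_true, and_true,
      addLabel.colHeights_eq_ofFn_update_iff hc]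
    exact and_congr_left fun hg => addLabel.isCPF_iff hjc (hcol g hg)
  rw [← card_image_of_injective _ (addLabel.injective c j)]
  congr 1
  ext f
  simp only [mem_filter, mem_univ, true_and, mem_image]
  constructor
  · rintro ⟨⟨hf, hh⟩, hf0⟩
    have hfc : #{b | f b = c} ≤ if f 0 = c then 1 else 0 := by
      rw [(colHeights_eq_ofFn_iff f _).1 hh c, Function.update_apply, hf0]
      rcases eq_or_ne c j with rfl | h
      · simp [hc]
      · simp [h, h.symm, hc]
    obtain ⟨g, rfl⟩ := addLabel.exists_eq hf0 (succ_ne_of_card_fiber_le hfc)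
    exact ⟨g, (hmem g).1 ⟨⟨hf, hh⟩, hf0⟩, rfl⟩
  · rintro ⟨g, hg, rfl⟩
    exact (hmem g).2 hg

lemma exists_ktilde_ofFn_eq {m : ℕ} {κ : Fin (m + 1) → ℕ} {j : Fin (m + 1)}
    (hj : ∀ x ≤ j, κ x ≠ 0) (hsum : ∑ x, κ x = m + 1) :
    ∃ c, j ≤ c ∧ Function.update κ j (κ j - 1) c = 0 ∧
      (∀ x < c, Function.update κ j (κ j - 1) x ≠ 0) ∧
      ktilde (List.ofFn κ) j = List.ofFn (Function.update κ j (κ j - 1) ∘ c.succAbove) := by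
  classical
  have hex : ∃ x, Function.update κ j (κ j - 1) x = 0 := by
    refine exists_eq_zero_of_sum_lt ?_
    have h₁ := sum_update_of_mem (mem_univ j) κ (κ j - 1)
    have h₂ := sum_eq_add_sum_sdiff_singleton_of_mem (mem_univ j) κ
    have := hj j le_rfl
    omega
  refine ⟨Fin.find _ hex, ?_, Fin.find_spec hex, fun x hx => Fin.find_min hex hx, ?_⟩
  · by_contra! hlt
    have := Fin.find_spec hex
    rw [Function.update_of_ne hlt.ne] at this
    exact hj _ hlt.le this
  · rw [ktilde, List.getD_eq_getElem _ _ (by simpa using j.2), List.getElem_ofFn, List.set_ofFn,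
      List.erase_ofFn (Fin.find_spec hex) fun x hx => Fin.find_min hex hx]

open Classical in
lemma cpfCountWith_eq_card (n : ℕ) (k : List ℕ) :
    cpfCountWith n k = #{f : Fin n → Fin n | IsCPF n f ∧ colHeights f = k} := by
  rw [cpfCountWith, Nat.card_eq_fintype_card, Fintype.card_subtype]

/-- Let n ≥ 2 and k ∈ Comp(n,n).  Then
|CPF(n,k)| = Σ_{j=1}^{i_k-1} |CPF(n-1,k̃_j)| (the sum written with 0-based j). -/
theorem statement9 (n : ℕ) (hn : 2 ≤ n) (k : List ℕ)
    (hlen : k.length = n) (hsum : k.sum = n) :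
    cpfCountWith n k =
      ∑ j ∈ Finset.range (k.idxOf 0), cpfCountWith (n - 1) (ktilde k j) := by
  classical
  obtain ⟨m, rfl⟩ : ∃ m, n = m + 1 := ⟨n - 1, by omega⟩
  obtain ⟨κ, rfl⟩ : ∃ κ : Fin (m + 1) → ℕ, List.ofFn κ = k :=
    ⟨fun x => k[(x : ℕ)], List.ext_getElem (by simp [hlen]) fun x _ _ => List.getElem_ofFn _⟩
  rw [List.sum_ofFn] at hsum
  simp only [cpfCountWith_eq_card, Nat.add_sub_cancel]
  rw [card_eq_sum_card_fiberwise fun f hf => mem_range.2 <|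
    (mem_filter.1 hf).2.2 ▸ (mem_filter.1 hf).2.1.apply_zero_lt_idxOf]
  refine sum_congr rfl fun j hj => ?_
  have hjm : j < m + 1 :=
    (mem_range.1 hj).trans_le (by simpa using (List.ofFn κ).idxOf_le_length (a := 0))
  obtain ⟨j, rfl⟩ : ∃ x : Fin (m + 1), (x : ℕ) = j := ⟨⟨j, hjm⟩, rfl⟩
  have hnz := (List.lt_idxOf_ofFn_iff κ 0 j).1 (mem_range.1 hj)
  obtain ⟨c, hjc, hc, hpos, hkt⟩ := exists_ktilde_ofFn_eq hnz hsum
  have hκ : Function.update (Function.update κ j (κ j - 1)) j (κ j - 1 + 1) = κ := by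
    rw [Function.update_idem, Nat.sub_add_cancel (Nat.one_le_iff_ne_zero.2 (hnz j le_rfl)),
      Function.update_eq_self]
  rw [hkt, ← card_isCPF_apply_zero_eq hjc hc hpos, Function.update_self, hκ, filter_filter]
  simp only [Fin.val_inj]
end

section
/- For every n ≥ 2, the number of good column-restricted parking functions of size n satisfies |GPF(n)| = Σ_{P ∈ CPF(n−1)} (2n−1 − #{c ∈ {1,…,n−1} : P⁻¹(c) ≠ ∅}). (Equivalently, the insertion map ι restricts to a bijection from pairs (P,p) with P ∈ CPF(n−1) and p one of the 2(n−1)+1 lattice points of the Dyck path of P that is not an upper-left corner onto GPF(n).) -/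
open Finset

attribute [local instance] Classical.propDecidable

/-- `f ∈ CPF(n)` (with n = m+1 and top label `Fin.last m`, i.e. the label n) is good if
either (a) n is the only label in its column, or (b) the column of n contains another
label, with maximum r, and the next column to the right is nonempty with all labels
greater than r (i.e. its minimum label is greater than r). -/
def IsGood (m : ℕ) (f : Fin (m + 1) → Fin (m + 1)) : Prop :=
  (∀ b, f b = f (Fin.last m) → b = Fin.last m) ∨
  (∃ r : Fin (m + 1), r ≠ Fin.last m ∧ f r = f (Fin.last m) ∧
    (∀ b, b ≠ Fin.last m → f b = f (Fin.last m) → b ≤ r) ∧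
    ∃ c : Fin (m + 1), (c : ℕ) = (f (Fin.last m) : ℕ) + 1 ∧
      (∃ b, f b = c) ∧ ∀ b, f b = c → r < b)

/-!
Every good `Q ∈ CPF(n)` arises in exactly one way from some `P ∈ CPF(n - 1)` by inserting the
label `n` into a column `c` on top of the `h` lowest labels of that column, the other labels of
column `c` and all later columns moving one column to the right. Goodness of `Q` says exactly that
the labels kept below `n` are smaller than the ones pushed into column `c + 1`, so merging these
two columns of `Q` (after removing `n`) inverts the insertion. The insertion preserves the parking
condition and every dominance index: the columns of `P` correspond to the columns of `Q` other
than `c` via `c.succAbove`, and column `c` of `Q` is never counted since it contains `n`. Column `c`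
must keep a label moving right unless it is empty, so a column of `P` with `k ≥ 1` labels offers
`k` slots, an empty column one, and the new last column one: `2n - 1 - #{nonempty columns}` in all.
-/

section FiberRank

variable {α β : Type*} [Fintype α] [LinearOrder α] [DecidableEq β] {g : α → β}

variable (g) in
noncomputable def fiberRank (a : α) : ℕ := #{b | g b = g a ∧ b < a}

lemma fiberRank_lt_card_of_subset {s : Finset α} {a : α} (ha : a ∈ s)
    (hs : ∀ b, g b = g a → b < a → b ∈ s) : fiberRank g a < #s := by
  refine card_lt_card ⟨fun b hb => ?_, fun hsub => ?_⟩
  · rw [mem_filter] at hb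
    exact hs b hb.2.1 hb.2.2
  · simpa using hsub ha

lemma card_le_fiberRank {s : Finset α} {a : α} (hs : ∀ b ∈ s, g b = g a ∧ b < a) :
    #s ≤ fiberRank g a :=
  card_le_card fun b hb => by simpa using hs b hb

lemma strictMonoOn_fiberRank (y : β) : StrictMonoOn (fiberRank g) {a | g a = y} :=
  fun a ha b hb hab => fiberRank_lt_card_of_subset (by simp_all)
    fun c hc hca => by simp_all [hca.trans hab]

lemma fiberRank_lt_card_fiber (a : α) : fiberRank g a < #{b | g b = g a} :=
  fiberRank_lt_card_of_subset (by simp) fun b hb _ => by simpa using hb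

lemma image_fiberRank (y : β) : image (fiberRank g) {a | g a = y} = range #{a | g a = y} := by
  refine eq_of_subset_of_card_le (fun r hr => ?_) ?_
  · obtain ⟨a, ha, rfl⟩ := mem_image.mp hr
    rw [mem_filter] at ha
    simpa [← ha.2] using fiberRank_lt_card_fiber a
  · rw [card_range, card_image_of_injOn]
    simpa using (strictMonoOn_fiberRank y).injOn

lemma card_filter_fiberRank_lt (y : β) (h : ℕ) :
    #{a | g a = y ∧ fiberRank g a < h} = min h #{a | g a = y} := by
  rw [← filter_filter, ← card_image_of_injOn ((strictMonoOn_fiberRank (g := g) y).injOn.mono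
    (by simp +contextual [Set.subset_def])), ← filter_image (p := (· < h)), image_fiberRank]
  convert card_range (min h #{a | g a = y}) using 2
  ext r
  simp only [mem_filter, mem_range]
  omega

lemma exists_fiberRank_eq {y : β} {h : ℕ} (hh : h < #{a | g a = y}) :
    ∃ a, g a = y ∧ fiberRank g a = h := by
  rw [← mem_range, ← image_fiberRank] at hh
  simpa using hh

lemma exists_le_of_lt_card_fiber {b : α} {h : ℕ} (hh : h < #{a | g a = g b}) :
    ∃ t, g t = g b ∧ h ≤ fiberRank g t ∧ b ≤ t := by
  by_cases hb : h ≤ fiberRank g b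
  · exact ⟨b, rfl, hb, le_rfl⟩
  · obtain ⟨t, ht, rfl⟩ := exists_fiberRank_eq hh
    refine ⟨t, ht, le_rfl, ((strictMonoOn_fiberRank (g b)).lt_iff_lt rfl ht).mp ?_ |>.le⟩
    omega

end FiberRank

lemma Fin.card_filter_univ_castSucc {n : ℕ} (p : Fin (n + 1) → Prop) [DecidablePred p] :
    #{x | p x} = #{x : Fin n | p x.castSucc} + if p (Fin.last n) then 1 else 0 := by
  simp only [card_filter]
  exact Fin.sum_univ_castSucc _

lemma Fin.val_succAbove_s13 {n : ℕ} (p : Fin (n + 1)) (i : Fin n) :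
    (p.succAbove i : ℕ) = if (i : ℕ) < p then (i : ℕ) else i + 1 := by
  unfold Fin.succAbove
  split_ifs <;> simp_all [Fin.lt_def]

lemma domIndex_le {n : ℕ} (f : Fin n → Fin n) (a : Fin n) : domIndex f a ≤ f a := by
  calc domIndex f a ≤ #(Iio (f a)) := card_le_card fun c hc => by simp_all
    _ = f a := Fin.card_Iio _

section Insertion

variable {m : ℕ} {f : Fin m → Fin m} {c : Fin (m + 1)} {h : ℕ}

variable (f c h) in
noncomputable def insertLast : Fin (m + 1) → Fin (m + 1) :=
  Fin.snoc (α := fun _ => Fin (m + 1))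
    (fun a => if (f a : ℕ) < c ∨ (f a : ℕ) = c ∧ fiberRank (fun b => (f b : ℕ)) a < h
      then (f a).castSucc else (f a).succ) c

-- For `c = m` the column is empty (no label of `f` lies there), which forces `h = 0`.
variable (f c h) in
def IsInsertionSlot : Prop := h < max #{a | (f a : ℕ) = c} 1

@[simp]
lemma insertLast_last : insertLast f c h (Fin.last m) = c := by
  simp [insertLast]

lemma val_insertLast_castSucc (a : Fin m) :
    (insertLast f c h a.castSucc : ℕ) =
      if (f a : ℕ) < c ∨ (f a : ℕ) = c ∧ fiberRank (fun b => (f b : ℕ)) a < h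
      then (f a : ℕ) else f a + 1 := by
  simp only [insertLast, Fin.snoc_castSucc]
  split_ifs <;> simp

lemma insertLast_castSucc_eq_self_iff (a : Fin m) :
    insertLast f c h a.castSucc = c ↔
      (f a : ℕ) = c ∧ fiberRank (fun b => (f b : ℕ)) a < h := by
  rw [Fin.ext_iff, val_insertLast_castSucc]
  split_ifs <;> omega

lemma insertLast_castSucc_eq_succAbove_iff (a d : Fin m) :
    insertLast f c h a.castSucc = c.succAbove d ↔
      f a = d ∧ ((d : ℕ) = c → h ≤ fiberRank (fun b => (f b : ℕ)) a) := by
  rw [Fin.ext_iff, Fin.ext_iff, val_insertLast_castSucc, Fin.val_succAbove_s13]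
  split_ifs <;> omega

lemma succAbove_lt_insertLast_iff (a d : Fin m) :
    c.succAbove d < insertLast f c h a.castSucc ↔ d < f a := by
  rw [Fin.lt_def, Fin.lt_def, val_insertLast_castSucc, Fin.val_succAbove_s13]
  split_ifs <;> omega

lemma IsInsertionSlot.lt_card_fiber (hs : IsInsertionSlot f c h) {b : Fin m}
    (hb : (f b : ℕ) = c) : h < #{a | (f a : ℕ) = f b} := by
  have : 0 < #{a | (f a : ℕ) = f b} := card_pos.mpr ⟨b, by simp⟩
  unfold IsInsertionSlot at hs
  rw [hb] at this ⊢
  omega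

lemma forall_insertLast_eq_succAbove_imp_iff (hs : IsInsertionSlot f c h) (a d : Fin m) :
    (∀ b, insertLast f c h b = c.succAbove d → b < a.castSucc) ↔ ∀ b, f b = d → b < a := by
  simp only [Fin.forall_fin_succ', insertLast_last, (Fin.succAbove_ne c d).symm, false_imp_iff,
    and_true, insertLast_castSucc_eq_succAbove_iff, Fin.castSucc_lt_castSucc_iff]
  refine ⟨fun H b hb => ?_, fun H b hb => H b hb.1⟩
  by_cases hd : (d : ℕ) = c
  · -- a label of column `c` is dominated by a label that moves to column `c + 1`
    subst hb
    obtain ⟨t, ht, hht, hbt⟩ := exists_le_of_lt_card_fiber (hs.lt_card_fiber hd)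
    exact hbt.trans_lt (H t ⟨Fin.ext ht, fun _ => hht⟩)
  · exact H b ⟨hb, fun h' => absurd h' hd⟩

lemma domIndex_insertLast (hs : IsInsertionSlot f c h) (a : Fin m) :
    domIndex (insertLast f c h) a.castSucc = domIndex f a := by
  unfold domIndex
  rw [← card_image_of_injective _ (Fin.succAbove_right_injective (p := c))]
  congr 1
  ext x
  simp only [mem_filter, mem_univ, true_and, mem_image]
  constructor
  · rintro ⟨hlt, H⟩
    have hx : x ≠ c := fun hx =>
      (Fin.castSucc_lt_last a).asymm (H (Fin.last m) (by rw [insertLast_last, hx]))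
    obtain ⟨d, rfl⟩ := Fin.exists_succAbove_eq hx
    exact ⟨d, ⟨(succAbove_lt_insertLast_iff a d).mp hlt,
      (forall_insertLast_eq_succAbove_imp_iff hs a d).mp H⟩, rfl⟩
  · rintro ⟨d, ⟨hlt, H⟩, rfl⟩
    exact ⟨(succAbove_lt_insertLast_iff a d).mpr hlt,
      (forall_insertLast_eq_succAbove_imp_iff hs a d).mpr H⟩

lemma card_insertLast_lt_of_le {i : ℕ} (hi : i ≤ c) :
    #{b | (insertLast f c h b : ℕ) < i} = #{a | (f a : ℕ) < i} := by
  rw [Fin.card_filter_univ_castSucc, insertLast_last, if_neg (by omega), add_zero]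
  congr 1
  refine filter_congr fun a _ => ?_
  rw [val_insertLast_castSucc]
  split_ifs <;> omega

lemma card_insertLast_lt_succ_of_lt {i : ℕ} (hi : c < i) :
    #{b | (insertLast f c h b : ℕ) < i + 1} = #{a | (f a : ℕ) < i} + 1 := by
  rw [Fin.card_filter_univ_castSucc, insertLast_last, if_pos (by omega)]
  congr 2
  refine filter_congr fun a _ => ?_
  rw [val_insertLast_castSucc]
  split_ifs <;> omega

lemma card_lt_add_one_le_card_insertLast_lt_succ {i : ℕ} (hi : c ≤ i) :
    #{a | (f a : ℕ) < i} + 1 ≤ #{b | (insertLast f c h b : ℕ) < i + 1} := by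
  rw [Fin.card_filter_univ_castSucc, insertLast_last, if_pos (by omega)]
  refine Nat.add_le_add_right (card_le_card (monotone_filter_right _ fun a ha => ?_)) 1
  rw [val_insertLast_castSucc]
  split_ifs <;> omega

lemma isParking_insertLast_iff : IsParking (m + 1) (insertLast f c h) ↔ IsParking m f := by
  have hc : (c : ℕ) ≤ m := Nat.lt_succ_iff.mp c.isLt
  refine ⟨fun hQ i hi => ?_, fun hf i hi => ?_⟩
  · rcases le_or_gt i c with hic | hic
    · simpa [card_insertLast_lt_of_le hic] using hQ i (by omega)
    · have := hQ (i + 1) (by omega)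
      rw [card_insertLast_lt_succ_of_lt hic] at this
      omega
  · rcases le_or_gt i c with hic | hic
    · simpa [card_insertLast_lt_of_le hic] using hf i (by omega)
    · obtain ⟨j, rfl⟩ : ∃ j, i = j + 1 := ⟨i - 1, by omega⟩
      have := card_lt_add_one_le_card_insertLast_lt_succ (f := f) (c := c) (h := h) (i := j)
        (by omega)
      have := hf j (by omega)
      omega

lemma isCPF_insertLast_iff (hs : IsInsertionSlot f c h) :
    IsCPF (m + 1) (insertLast f c h) ↔ IsCPF m f := by
  have hlast : domIndex (insertLast f c h) (Fin.last m) ≤ m :=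
    (domIndex_le _ _).trans (by simpa using Nat.lt_succ_iff.mp c.isLt)
  simp [IsCPF, isParking_insertLast_iff, Fin.forall_fin_succ', domIndex_insertLast hs, hlast]

end Insertion

section Goodness

variable {m : ℕ}

lemma isGood_iff {Q : Fin (m + 1) → Fin (m + 1)} :
    IsGood m Q ↔ ∀ a, a ≠ Fin.last m → Q a = Q (Fin.last m) →
      (∃ b, (Q b : ℕ) = Q (Fin.last m) + 1) ∧ ∀ b, (Q b : ℕ) = Q (Fin.last m) + 1 → a < b := by
  constructor
  · rintro (hA | ⟨r, -, -, hr, c', hc', ⟨b, hb⟩, hlt⟩) a ha hQa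
    · exact absurd (hA a hQa) ha
    · exact ⟨⟨b, by rw [hb, hc']⟩,
        fun b' hb' => (hr a ha hQa).trans_lt (hlt b' (Fin.ext (by rw [hb', hc'])))⟩
  · intro H
    by_cases hA : ∀ b, Q b = Q (Fin.last m) → b = Fin.last m
    · exact Or.inl hA
    push Not at hA
    obtain ⟨a, hQa, ha⟩ := hA
    set S : Finset (Fin (m + 1)) := {b | b ≠ Fin.last m ∧ Q b = Q (Fin.last m)}
    have hS : S.Nonempty := ⟨a, by simp [S, ha, hQa]⟩
    obtain ⟨hr, hQr⟩ : S.max' hS ≠ Fin.last m ∧ Q (S.max' hS) = Q (Fin.last m) := by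
      simpa [S] using S.max'_mem hS
    obtain ⟨⟨b, hb⟩, hlt⟩ := H _ hr hQr
    have : (Q (Fin.last m) : ℕ) + 1 < m + 1 := hb ▸ (Q b).isLt
    exact Or.inr ⟨S.max' hS, hr, hQr, fun b hb hQb => S.le_max' b (by simp [S, hb, hQb]),
      ⟨_, this⟩, rfl, ⟨b, Fin.ext hb⟩, fun b' hb' => hlt b' (by rw [hb'])⟩

variable {f : Fin m → Fin m} {c : Fin (m + 1)} {h : ℕ}

lemma isGood_insertLast (hs : IsInsertionSlot f c h) : IsGood m (insertLast f c h) := by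
  rw [isGood_iff, insertLast_last]
  intro a ha hQa
  obtain ⟨a, rfl⟩ := Fin.exists_castSucc_eq.mpr ha
  obtain ⟨hfa, hrank⟩ := (insertLast_castSucc_eq_self_iff a).mp hQa
  obtain ⟨t, ht, hrt⟩ := exists_fiberRank_eq (hs.lt_card_fiber hfa)
  refine ⟨⟨t.castSucc, ?_⟩, fun b hb => ?_⟩
  · rw [val_insertLast_castSucc]
    split_ifs <;> omega
  · cases b using Fin.lastCases with
    | last => simp at hb
    | cast b =>
      rw [val_insertLast_castSucc] at hb
      split_ifs at hb with hst
      · omega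
      · have hfb : (f b : ℕ) = f a := by omega
        have : fiberRank (fun b => (f b : ℕ)) a < fiberRank (fun b => (f b : ℕ)) b := by omega
        exact Fin.castSucc_lt_castSucc_iff.mpr
          (((strictMonoOn_fiberRank (g := fun b => (f b : ℕ)) _).lt_iff_lt rfl hfb).mp this)

end Goodness

section Removal

variable {m : ℕ} {Q : Fin (m + 1) → Fin (m + 1)} {f : Fin m → Fin m}

lemma IsGood.exists_next (hQ : IsGood m Q) {a : Fin m} (ha : Q a.castSucc = Q (Fin.last m)) :
    ∃ b, (Q b : ℕ) = Q (Fin.last m) + 1 :=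
  (isGood_iff.mp hQ a.castSucc (Fin.castSucc_ne_last a) ha).1

lemma IsGood.lt_of_next (hQ : IsGood m Q) {a b : Fin m} (ha : Q a.castSucc = Q (Fin.last m))
    (hb : (Q b.castSucc : ℕ) = Q (Fin.last m) + 1) : a < b :=
  Fin.castSucc_lt_castSucc_iff.mp ((isGood_iff.mp hQ a.castSucc (Fin.castSucc_ne_last a) ha).2 _ hb)

/-- `f` is `Q` with the label `n` removed and the column right of `n` merged into `n`'s column. -/
def IsLastRemoval (Q : Fin (m + 1) → Fin (m + 1)) (f : Fin m → Fin m) : Prop :=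
  ∀ a, (f a : ℕ) =
    if (Q a.castSucc : ℕ) ≤ Q (Fin.last m) then (Q a.castSucc : ℕ) else Q a.castSucc - 1

lemma exists_isLastRemoval (hQ : IsGood m Q) : ∃ f, IsLastRemoval Q f := by
  suffices hv : ∀ a : Fin m, (if (Q a.castSucc : ℕ) ≤ Q (Fin.last m) then (Q a.castSucc : ℕ)
      else Q a.castSucc - 1) < m from ⟨fun a => ⟨_, hv a⟩, fun _ => rfl⟩
  intro a
  have hQa := (Q a.castSucc).isLt
  have hc := (Q (Fin.last m)).isLt
  split_ifs with hle
  · rcases hle.lt_or_eq with hlt | heq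
    · omega
    · obtain ⟨b, hb⟩ := hQ.exists_next (Fin.ext heq)
      have := (Q b).isLt
      omega
  · omega

lemma IsLastRemoval.fiberRank_lt (hf : IsLastRemoval Q f) (hQ : IsGood m Q) {a : Fin m}
    (ha : Q a.castSucc = Q (Fin.last m)) :
    fiberRank (fun b => (f b : ℕ)) a < #{b : Fin m | Q b.castSucc = Q (Fin.last m)} := by
  refine fiberRank_lt_card_of_subset (by simpa using ha) fun b hb hba => ?_
  have hab := congrArg Fin.val ha
  simp only [hf b, hf a] at hb
  rw [mem_filter_univ]
  by_contra hne
  have : (Q b.castSucc : ℕ) = Q (Fin.last m) + 1 := by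
    have := Fin.val_ne_of_ne hne
    split_ifs at hb <;> omega
  exact (hQ.lt_of_next ha this).asymm hba

lemma IsLastRemoval.le_fiberRank (hf : IsLastRemoval Q f) (hQ : IsGood m Q) {a : Fin m}
    (ha : (Q a.castSucc : ℕ) = Q (Fin.last m) + 1) :
    #{b : Fin m | Q b.castSucc = Q (Fin.last m)} ≤ fiberRank (fun b => (f b : ℕ)) a := by
  refine card_le_fiberRank fun b hb => ⟨?_, hQ.lt_of_next (by simpa using hb) ha⟩
  have : (Q b.castSucc : ℕ) = Q (Fin.last m) := by simpa [Fin.ext_iff] using hb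
  simp only [hf b, hf a]
  split_ifs <;> omega

lemma IsLastRemoval.isInsertionSlot (hf : IsLastRemoval Q f) (hQ : IsGood m Q) :
    IsInsertionSlot f (Q (Fin.last m)) #{b : Fin m | Q b.castSucc = Q (Fin.last m)} := by
  unfold IsInsertionSlot
  rcases Nat.eq_zero_or_pos #{b : Fin m | Q b.castSucc = Q (Fin.last m)} with h0 | hpos
  · rw [h0]
    exact lt_max_of_lt_right one_pos
  obtain ⟨a, ha⟩ := card_pos.mp hpos
  obtain ⟨b, hb⟩ := hQ.exists_next (a := a) (by simpa using ha)
  obtain ⟨b, rfl⟩ : ∃ b' : Fin m, b'.castSucc = b :=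
    Fin.exists_castSucc_eq.mpr fun hb' => by subst hb'; omega
  -- column `c` of `f` also contains `b`, which came from column `c + 1` of `Q`
  refine lt_max_of_lt_left (card_lt_card ⟨fun x hx => ?_, fun hsub => ?_⟩)
  · have : (Q x.castSucc : ℕ) = Q (Fin.last m) := by simpa [Fin.ext_iff] using hx
    simp only [mem_filter, mem_univ, true_and]
    rw [hf, if_pos this.le, this]
  · have hb' : b ∈ ({a | (f a : ℕ) = Q (Fin.last m)} : Finset (Fin m)) := by
      simp only [mem_filter, mem_univ, true_and]
      rw [hf, if_neg (by omega)]
      omega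
    have : Q b.castSucc = Q (Fin.last m) := by simpa using hsub hb'
    rw [this] at hb
    omega

lemma IsLastRemoval.insertLast_eq (hf : IsLastRemoval Q f) (hQ : IsGood m Q) :
    insertLast f (Q (Fin.last m)) #{b : Fin m | Q b.castSucc = Q (Fin.last m)} = Q := by
  funext b
  cases b using Fin.lastCases with
  | last => exact insertLast_last
  | cast a =>
    ext
    rw [val_insertLast_castSucc, hf]
    rcases lt_trichotomy (Q a.castSucc : ℕ) (Q (Fin.last m)) with hlt | heq | hgt
    · split_ifs <;> omega
    · have := hf.fiberRank_lt hQ (Fin.ext heq)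
      split_ifs <;> omega
    · by_cases hnext : (Q a.castSucc : ℕ) = Q (Fin.last m) + 1
      · have := hf.le_fiberRank hQ hnext
        split_ifs <;> omega
      · split_ifs <;> omega

lemma exists_insertLast_eq (hQ : IsGood m Q) :
    ∃ f c h, IsInsertionSlot f c h ∧ insertLast f c h = Q := by
  obtain ⟨f, hf⟩ := exists_isLastRemoval hQ
  exact ⟨f, _, _, hf.isInsertionSlot hQ, hf.insertLast_eq hQ⟩

end Removal

section Counting

variable {m : ℕ}

lemma card_insertLast_castSucc_eq_self {f : Fin m → Fin m} {c : Fin (m + 1)} {h : ℕ}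
    (hs : IsInsertionSlot f c h) : #{a : Fin m | insertLast f c h a.castSucc = c} = h := by
  rw [filter_congr fun a _ => insertLast_castSucc_eq_self_iff a]
  rcases Nat.eq_zero_or_pos h with rfl | hpos
  · simp
  · have := card_filter_fiberRank_lt (g := fun a => (f a : ℕ)) c h
    unfold IsInsertionSlot at hs
    omega

lemma insertLast_injective {f₁ f₂ : Fin m → Fin m} {c₁ c₂ : Fin (m + 1)} {h₁ h₂ : ℕ}
    (hs₁ : IsInsertionSlot f₁ c₁ h₁) (hs₂ : IsInsertionSlot f₂ c₂ h₂)
    (he : insertLast f₁ c₁ h₁ = insertLast f₂ c₂ h₂) : f₁ = f₂ ∧ c₁ = c₂ ∧ h₁ = h₂ := by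
  obtain rfl : c₁ = c₂ := by simpa using congrFun he (Fin.last m)
  refine ⟨funext fun a => Fin.ext ?_, rfl, ?_⟩
  · have := congrArg Fin.val (congrFun he a.castSucc)
    rw [val_insertLast_castSucc, val_insertLast_castSucc] at this
    split_ifs at this <;> omega
  · rw [← card_insertLast_castSucc_eq_self hs₁, ← card_insertLast_castSucc_eq_self hs₂, he]

lemma IsInsertionSlot.lt_succ {f : Fin m → Fin m} {c : Fin (m + 1)} {h : ℕ}
    (hs : IsInsertionSlot f c h) : h < m + 1 := by
  have : #{a | (f a : ℕ) = c} ≤ m := (card_filter_le _ _).trans (card_fin m).le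
  unfold IsInsertionSlot at hs
  omega

lemma card_filter_isInsertionSlot (f : Fin m → Fin m) (c : Fin (m + 1)) :
    #{h : Fin (m + 1) | IsInsertionSlot f c h} = max #{a | (f a : ℕ) = c} 1 := by
  have : #{a | (f a : ℕ) = c} ≤ m := (card_filter_le _ _).trans (card_fin m).le
  calc #{h : Fin (m + 1) | IsInsertionSlot f c h}
      = min (m + 1) (max #{a | (f a : ℕ) = c} 1) := by
        convert Fin.card_filter_val_lt
        exact Iff.rfl
    _ = max #{a | (f a : ℕ) = c} 1 := by omega

lemma sum_max_card_fiber_one_add_card_range (f : Fin m → Fin m) :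
    ∑ d : Fin m, max #{a | (f a : ℕ) = d} 1 + #{d : Fin m | ∃ a, f a = d} = 2 * m := by
  have hsplit : ∀ d : Fin m, max #{a | (f a : ℕ) = d} 1 + (if ∃ a, f a = d then 1 else 0) =
      #{a | (f a : ℕ) = d} + 1 := by
    intro d
    have hne : (∃ a, f a = d) ↔ 0 < #{a | (f a : ℕ) = d} := by
      simp [card_pos, Fin.val_inj, filter_nonempty_iff]
    simp only [hne]
    split_ifs <;> omega
  have hsum : ∑ d : Fin m, #{a | (f a : ℕ) = d} = m := by
    simpa [Fin.val_inj] using (card_eq_sum_card_fiberwise (f := f) (s := univ) (t := univ)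
      (by simp)).symm
  rw [card_filter, ← sum_add_distrib, sum_congr rfl fun d _ => hsplit d, sum_add_distrib, hsum]
  simp
  ring

lemma card_insertionSlots (f : Fin m → Fin m) :
    #{p : Fin (m + 1) × Fin (m + 1) | IsInsertionSlot f p.1 p.2} =
      2 * (m + 1) - 1 - #{c : Fin m | ∃ a, f a = c} := by
  have hlast : #{a | (f a : ℕ) = m} = 0 :=
    card_eq_zero.mpr (filter_eq_empty_iff.mpr fun a _ => (f a).isLt.ne)
  have := sum_max_card_fiber_one_add_card_range f
  rw [card_filter, Fintype.sum_prod_type]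
  simp only [← card_filter, card_filter_isInsertionSlot, Fin.sum_univ_castSucc, Fin.val_castSucc,
    Fin.val_last, hlast]
  omega

end Counting

theorem statement13_general (m : ℕ) :
    Nat.card {f : Fin (m + 1) → Fin (m + 1) // IsCPF (m + 1) f ∧ IsGood m f} =
      ∑ f ∈ Finset.univ.filter (fun f : Fin m → Fin m => IsCPF m f),
        (2 * (m + 1) - 1 -
          (Finset.univ.filter (fun c : Fin m => ∃ a, f a = c)).card) := by
  rw [Nat.card_eq_fintype_card, Fintype.card_subtype]
  simp_rw [← card_insertionSlots, ← card_sigma]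
  refine (card_bij (fun x _ => insertLast x.1 x.2.1 x.2.2) ?_ ?_ ?_).symm
  · rintro ⟨f, c, h⟩ hx
    simp only [mem_sigma, mem_filter, mem_univ, true_and] at hx ⊢
    exact ⟨(isCPF_insertLast_iff hx.2).mpr hx.1, isGood_insertLast hx.2⟩
  · rintro ⟨f₁, c₁, h₁⟩ hx₁ ⟨f₂, c₂, h₂⟩ hx₂ he
    simp only [mem_sigma, mem_filter, mem_univ, true_and] at hx₁ hx₂
    obtain ⟨rfl, rfl, hh⟩ := insertLast_injective hx₁.2 hx₂.2 he
    rw [Fin.val_inj.mp hh]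
  · intro Q hQ
    simp only [mem_filter, mem_univ, true_and] at hQ
    obtain ⟨f, c, h, hs, rfl⟩ := exists_insertLast_eq hQ.2
    exact ⟨⟨f, c, ⟨h, hs.lt_succ⟩⟩, by simpa [(isCPF_insertLast_iff hs).symm] using ⟨hQ.1, hs⟩,
      rfl⟩

/-- For every n ≥ 2 (written n = m+1, m ≥ 1), the number of good column-restricted
parking functions of size n is
Σ_{P ∈ CPF(n-1)} (2n-1 − #{nonempty columns of P}). -/
theorem statement13 (m : ℕ) (hm : 1 ≤ m) :
    Nat.card {f : Fin (m + 1) → Fin (m + 1) // IsCPF (m + 1) f ∧ IsGood m f} =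
      ∑ f ∈ Finset.univ.filter (fun f : Fin m → Fin m => IsCPF m f),
        (2 * (m + 1) - 1 -
          (Finset.univ.filter (fun c : Fin m => ∃ a, f a = c)).card) :=
  statement13_general m
end
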